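/- Let a(β,r) = √((2/r)(ln β^{-1} - ((r+1)/2) ln((2/r) ln β^{-1}) + ln(C(d,r) r^{-1} (2π)^{-r/2}))) and u_β(x) = (a(β,r) + x/(r a(β,r))) β^{-1}. Then (β u_β(x))² = a(β,r)² + 2x/r + o(1) as β → 0, and consequently C(d,r)(2π)^{-r/2} r^{-1} β^{-1} (β u_β(x))^{-(r+1)} exp(-(r/2)(β u_β(x))²) → e^{-x} as β → 0. -/

import Mathlib

open Filter Real

noncomputable def aOrd (d r : ℕ) (β : ℝ) : ℝ :=
  Real.sqrt ((2 / r) * (Real.log β⁻¹ -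
    (((r : ℝ) + 1) / 2) * Real.log ((2 / r) * Real.log β⁻¹) +
    Real.log ((d.choose r : ℝ) * (r : ℝ)⁻¹ * (2 * π) ^ (-(r : ℝ) / 2))))

noncomputable def uOrd (d r : ℕ) (β x : ℝ) : ℝ :=
  (aOrd d r β + x / (r * aOrd d r β)) / β

lemma sqrt_tendsto_atTop' : Tendsto Real.sqrt atTop atTop := by
  apply tendsto_atTop_atTop.2
  intro b
  exact ⟨max b 0 ^ 2, fun a ha => le_trans (le_max_left b 0)
    (by rw [← Real.sqrt_sq (le_max_right b 0)]; exact Real.sqrt_le_sqrt ha)⟩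

lemma aux1 (R a x : ℝ) (hR : R ≠ 0) (ha : a ≠ 0) :
    (x / (R * a)) ^ 2 = (a + x / (R * a)) ^ 2 - (a ^ 2 + 2 * x / R) := by
  field_simp; ring

lemma aux2 (R a x : ℝ) (hR : R ≠ 0) (ha : a ≠ 0) :
    (a + x / (R * a)) ^ 2 = a ^ 2 + 2 * x / R + x ^ 2 / (R ^ 2 * a ^ 2) := by
  field_simp; ring

lemma aux3 (R L C x a s : ℝ) (hR : R ≠ 0) (ha : a ≠ 0) (hs : s ≠ 0) :
    (-((2 / R) * ((R + 1) / 2)) * L + (2 / R) * C + 2 * x / R + x ^ 2 / (R ^ 2 * a ^ 2)) / s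
      = -((2 / R) * ((R + 1) / 2)) * (L / s) + ((2 / R) * C + 2 * x / R) * s⁻¹
        + x ^ 2 / R ^ 2 * (a ^ 2 * s)⁻¹ := by
  field_simp; ring

lemma aux_split (R a x : ℝ) (hR : R ≠ 0) (ha : a ≠ 0) :
    -(R / 2) * (a ^ 2 + 2 * x / R + x ^ 2 / (R ^ 2 * a ^ 2))
      = -(R / 2) * a ^ 2 + (-x - x ^ 2 / (2 * R * a ^ 2)) := by
  field_simp; ring

lemma aux_e1 (R lb ls lc : ℝ) (hR : R ≠ 0) :
    -(R / 2) * ((2 / R) * (lb - ((R + 1) / 2) * ls + lc))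
      = -lb + (((R + 1) / 2) * ls + (-lc)) := by
  field_simp; ring

lemma aux_final (cc βv upinv sk E : ℝ) (hβ : βv ≠ 0) (hc : cc ≠ 0) :
    sk * upinv * E = cc * βv⁻¹ * upinv * (βv * sk * cc⁻¹ * E) := by
  field_simp

set_option maxHeartbeats 1000000 in
/-- The key normalization computation: `(β u_β(x))² = a(β,r)² + 2x/r + o(1)` and
`C(d,r)(2π)^{-r/2} r⁻¹ β⁻¹ (β u_β(x))^{-(r+1)} exp(-(r/2)(β u_β(x))²) → e^{-x}`
as `β → 0⁺`. -/
theorem normalization_computation (d r : ℕ) (hr : 1 ≤ r) (hrd : r ≤ d) (x : ℝ) :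
    Tendsto (fun β : ℝ =>
        (β * uOrd d r β x) ^ 2 - (aOrd d r β ^ 2 + 2 * x / r))
      (nhdsWithin 0 (Set.Ioi 0)) (nhds 0) ∧
    Tendsto (fun β : ℝ =>
        (d.choose r : ℝ) * (2 * π) ^ (-(r : ℝ) / 2) * (r : ℝ)⁻¹ * β⁻¹ *
          ((β * uOrd d r β x) ^ (r + 1))⁻¹ *
          Real.exp (-((r : ℝ) / 2) * (β * uOrd d r β x) ^ 2))
      (nhdsWithin 0 (Set.Ioi 0)) (nhds (Real.exp (-x))) := by
  have hr0 : (0 : ℝ) < r := by exact_mod_cast hr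
  have hr0' : (r : ℝ) ≠ 0 := ne_of_gt hr0
  have h2r : (0 : ℝ) < 2 / r := by positivity
  set c : ℝ := (d.choose r : ℝ) * (r : ℝ)⁻¹ * (2 * π) ^ (-(r : ℝ) / 2) with hcdef
  have hc0 : 0 < c := by
    refine mul_pos (mul_pos ?_ (inv_pos.2 hr0)) (Real.rpow_pos_of_pos (by positivity) _)
    exact_mod_cast Nat.choose_pos hrd
  set A : ℝ → ℝ := fun t => Real.sqrt ((2 / r) * (t - (((r : ℝ) + 1) / 2) *
      Real.log ((2 / r) * t) + Real.log c)) with hAdef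
  have haOrd : ∀ β : ℝ, aOrd d r β = A (Real.log β⁻¹) := fun β => rfl
  have hL : Tendsto (fun β : ℝ => Real.log β⁻¹) (nhdsWithin 0 (Set.Ioi 0)) atTop :=
    Real.tendsto_log_atTop.comp tendsto_inv_nhdsGT_zero
  have hS : Tendsto (fun t : ℝ => (2 / r) * t) atTop atTop :=
    Tendsto.const_mul_atTop h2r tendsto_id
  have hlo : (fun t : ℝ => (((r : ℝ) + 1) / 2) * Real.log ((2 / r) * t)) =o[atTop]
      (fun t : ℝ => t) := by
    have h1 : (fun t : ℝ => Real.log ((2 / r) * t)) =o[atTop] (fun t : ℝ => (2 / r) * t) :=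
      Real.isLittleO_log_id_atTop.comp_tendsto hS
    have h2 : (fun t : ℝ => (2 / r) * t) =O[atTop] (fun t : ℝ => t) :=
      (Asymptotics.isBigO_refl (fun t : ℝ => t) atTop).const_mul_left (2 / r)
    exact (h1.trans_isBigO h2).const_mul_left _
  have hkey : Tendsto (fun t : ℝ => t - (((r : ℝ) + 1) / 2) * Real.log ((2 / r) * t) +
      Real.log c) atTop atTop := by
    have hb := hlo.def (by norm_num : (0 : ℝ) < 1 / 2)
    apply tendsto_atTop_mono' atTop ?_
      (tendsto_atTop_add_const_right atTop (Real.log c)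
        (Tendsto.atTop_div_const two_pos tendsto_id))
    filter_upwards [hb, eventually_ge_atTop (0 : ℝ)] with t hbt ht0
    have h1 : (((r : ℝ) + 1) / 2) * Real.log ((2 / r) * t) ≤ t / 2 := by
      have := (le_abs_self _).trans hbt
      simp only [Real.norm_eq_abs, abs_of_nonneg ht0] at this
      linarith
    simp only [id]
    linarith
  have hInner : Tendsto (fun t : ℝ => (2 / r) * (t - (((r : ℝ) + 1) / 2) *
      Real.log ((2 / r) * t) + Real.log c)) atTop atTop :=
    Tendsto.const_mul_atTop h2r hkey
  have hA : Tendsto A atTop atTop := sqrt_tendsto_atTop'.comp hInner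
  have hAL : Tendsto (fun β : ℝ => A (Real.log β⁻¹)) (nhdsWithin 0 (Set.Ioi 0)) atTop :=
    hA.comp hL
  have hA2 : Tendsto (fun t : ℝ => A t ^ 2) atTop atTop :=
    (hA.atTop_mul_atTop₀ hA).congr fun t => (sq (A t)).symm
  -- Part 1
  have part1 : Tendsto (fun β : ℝ =>
      (β * uOrd d r β x) ^ 2 - (aOrd d r β ^ 2 + 2 * x / r))
      (nhdsWithin 0 (Set.Ioi 0)) (nhds 0) := by
    have h1 : Tendsto (fun β : ℝ => (x / (r * A (Real.log β⁻¹))) ^ 2)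
        (nhdsWithin 0 (Set.Ioi 0)) (nhds 0) := by
      have h2 : Tendsto (fun β : ℝ => x / (r * A (Real.log β⁻¹)))
          (nhdsWithin 0 (Set.Ioi 0)) (nhds 0) :=
        Tendsto.div_atTop tendsto_const_nhds (Tendsto.const_mul_atTop hr0 hAL)
      simpa using h2.pow 2
    refine h1.congr' ?_
    filter_upwards [self_mem_nhdsWithin, hAL.eventually_gt_atTop 0] with β hβ ha0
    have hβ0 : β ≠ 0 := ne_of_gt hβ
    have ha0' : A (Real.log β⁻¹) ≠ 0 := ne_of_gt ha0
    simp only [uOrd, haOrd]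
    rw [mul_div_cancel₀ _ hβ0]
    exact aux1 r _ x hr0' ha0'
  refine ⟨part1, ?_⟩
  -- Part 2
  set U : ℝ → ℝ := fun t => A t + x / (r * A t) with hUdef
  have hU : Tendsto U atTop atTop := by
    have h2 : Tendsto (fun t => x / (r * A t)) atTop (nhds 0) :=
      Tendsto.div_atTop tendsto_const_nhds (Tendsto.const_mul_atTop hr0 hA)
    exact (h2.add_atTop hA).congr fun t => by simp only [hUdef]; ring
  have hev : ∀ᶠ t in atTop, 0 < A t ∧
      A t ^ 2 = (2 / r) * (t - (((r : ℝ) + 1) / 2) * Real.log ((2 / r) * t) + Real.log c) ∧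
      0 < (2 / r) * t ∧ 0 < U t := by
    filter_upwards [hA.eventually_gt_atTop 0, hInner.eventually_ge_atTop 0,
      hS.eventually_gt_atTop 0, hU.eventually_gt_atTop 0] with t h1 h2 h3 h4
    exact ⟨h1, Real.sq_sqrt h2, h3, h4⟩
  have hU2 : ∀ᶠ t in atTop, (U t) ^ 2 = (2 / r) * t +
      (-((2 / r) * (((r : ℝ) + 1) / 2)) * Real.log ((2 / r) * t) + (2 / r) * Real.log c
        + 2 * x / r + x ^ 2 / (r ^ 2 * A t ^ 2)) := by
    filter_upwards [hev] with t ⟨h1, h2, _, _⟩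
    have ha' : A t ≠ 0 := ne_of_gt h1
    have e1 : (U t) ^ 2 = A t ^ 2 + 2 * x / r + x ^ 2 / (r ^ 2 * A t ^ 2) := by
      simp only [hUdef]
      exact aux2 r _ x hr0' ha'
    rw [e1, h2]; ring
  have hD : Tendsto (fun t : ℝ =>
      (-((2 / r) * (((r : ℝ) + 1) / 2)) * Real.log ((2 / r) * t) + (2 / r) * Real.log c
        + 2 * x / r + x ^ 2 / (r ^ 2 * A t ^ 2)) / ((2 / r) * t)) atTop (nhds 0) := by
    have l1 : Tendsto (fun t : ℝ => Real.log ((2 / r) * t) / ((2 / r) * t)) atTop (nhds 0) :=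
      (Real.isLittleO_log_id_atTop.tendsto_div_nhds_zero).comp hS
    have l2 : Tendsto (fun t : ℝ => ((2 / r) * t)⁻¹) atTop (nhds 0) :=
      tendsto_inv_atTop_zero.comp hS
    have l3 : Tendsto (fun t : ℝ => (A t ^ 2 * ((2 / r) * t))⁻¹) atTop (nhds 0) :=
      tendsto_inv_atTop_zero.comp (Tendsto.atTop_mul_atTop₀ hA2 hS)
    have lsum : Tendsto (fun t : ℝ =>
        -((2 / r) * (((r : ℝ) + 1) / 2)) * (Real.log ((2 / r) * t) / ((2 / r) * t))
        + ((2 / r) * Real.log c + 2 * x / r) * ((2 / r) * t)⁻¹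
        + x ^ 2 / r ^ 2 * (A t ^ 2 * ((2 / r) * t))⁻¹) atTop (nhds 0) := by
      have h4 := ((l1.const_mul (-((2 / (r:ℝ)) * (((r:ℝ) + 1) / 2)))).add
        (l2.const_mul ((2 / (r:ℝ)) * Real.log c + 2 * x / (r:ℝ)))).add
        (l3.const_mul (x ^ 2 / (r:ℝ) ^ 2))
      simpa using h4
    refine lsum.congr' ?_
    filter_upwards [hev] with t ⟨h1, _, h3, _⟩
    exact (aux3 r (Real.log ((2 / r) * t)) (Real.log c) x (A t) ((2 / r) * t)
      hr0' (ne_of_gt h1) (ne_of_gt h3)).symm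
  have hratio : Tendsto (fun t : ℝ => (2 / r) * t / (U t) ^ 2) atTop (nhds 1) := by
    have hq : Tendsto (fun t : ℝ => (U t) ^ 2 / ((2 / r) * t)) atTop (nhds 1) := by
      have h1 : Tendsto (fun t : ℝ => 1 +
          (-((2 / r) * (((r : ℝ) + 1) / 2)) * Real.log ((2 / r) * t) + (2 / r) * Real.log c
            + 2 * x / r + x ^ 2 / (r ^ 2 * A t ^ 2)) / ((2 / r) * t)) atTop (nhds 1) := by
        simpa using (tendsto_const_nhds.add hD)
      refine h1.congr' ?_
      filter_upwards [hev, hU2] with t ⟨_, _, h3, _⟩ h5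
      rw [h5]
      conv_rhs => rw [add_div, div_self (ne_of_gt h3)]
    have h2 := hq.inv₀ one_ne_zero
    rw [inv_one] at h2
    exact h2.congr fun t => by rw [inv_div]
  have hrpow : Tendsto (fun t : ℝ => ((2 / r) * t / (U t) ^ 2) ^ (((r : ℝ) + 1) / 2))
      atTop (nhds 1) := by
    have := hratio.rpow (tendsto_const_nhds : Tendsto (fun _ : ℝ => ((r : ℝ) + 1) / 2)
      atTop (nhds (((r : ℝ) + 1) / 2))) (Or.inl one_ne_zero)
    simpa using this
  have hexp : Tendsto (fun t : ℝ => Real.exp (-x - x ^ 2 / (2 * r * A t ^ 2)))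
      atTop (nhds (Real.exp (-x))) := by
    have h1 : Tendsto (fun t : ℝ => -x - x ^ 2 / (2 * r * A t ^ 2)) atTop (nhds (-x)) := by
      have h2 : Tendsto (fun t : ℝ => x ^ 2 / (2 * r * A t ^ 2)) atTop (nhds 0) :=
        Tendsto.div_atTop tendsto_const_nhds (Tendsto.const_mul_atTop (by positivity) hA2)
      simpa using tendsto_const_nhds.sub h2
    exact (Real.continuous_exp.tendsto _).comp h1
  have hG : Tendsto (fun t : ℝ => ((2 / r) * t / (U t) ^ 2) ^ (((r : ℝ) + 1) / 2) *
      Real.exp (-x - x ^ 2 / (2 * r * A t ^ 2))) atTop (nhds (Real.exp (-x))) := by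
    simpa using hrpow.mul hexp
  refine (hG.comp hL).congr' ?_
  filter_upwards [self_mem_nhdsWithin, hL.eventually hev] with β hβ hevβ
  obtain ⟨ha0, ha2, hs0, hu0⟩ := hevβ
  have hβ0 : (0 : ℝ) < β := hβ
  have hβ0' : β ≠ 0 := ne_of_gt hβ0
  have ha0' : A (Real.log β⁻¹) ≠ 0 := ne_of_gt ha0
  have hu0' : U (Real.log β⁻¹) ≠ 0 := ne_of_gt hu0
  simp only [Function.comp_apply]
  have hbu : β * uOrd d r β x = U (Real.log β⁻¹) := by
    simp only [uOrd, haOrd, hUdef]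
    rw [mul_div_cancel₀ _ hβ0']
  have hu2 : U (Real.log β⁻¹) ^ 2 = A (Real.log β⁻¹) ^ 2 + 2 * x / r +
      x ^ 2 / (r ^ 2 * A (Real.log β⁻¹) ^ 2) := by
    simp only [hUdef]
    exact aux2 r _ x hr0' ha0'
  have hexp_split : Real.exp (-((r : ℝ) / 2) * U (Real.log β⁻¹) ^ 2) =
      Real.exp (-((r : ℝ) / 2) * A (Real.log β⁻¹) ^ 2) *
        Real.exp (-x - x ^ 2 / (2 * r * A (Real.log β⁻¹) ^ 2)) := by
    rw [← Real.exp_add]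
    congr 1
    rw [hu2]
    exact aux_split r _ x hr0' ha0'
  have hnl : -Real.log β⁻¹ = Real.log β := by rw [Real.log_inv, neg_neg]
  have hexpa : Real.exp (-((r : ℝ) / 2) * A (Real.log β⁻¹) ^ 2) =
      β * ((2 / r) * Real.log β⁻¹) ^ (((r : ℝ) + 1) / 2) * c⁻¹ := by
    have e1 : -((r : ℝ) / 2) * A (Real.log β⁻¹) ^ 2 =
        Real.log β + ((((r : ℝ) + 1) / 2) * Real.log ((2 / r) * Real.log β⁻¹)
          + (-Real.log c)) := by
      rw [ha2, aux_e1 r (Real.log β⁻¹) (Real.log ((2 / r) * Real.log β⁻¹)) (Real.log c) hr0',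
        hnl]
    rw [e1, Real.exp_add, Real.exp_add, Real.exp_log hβ0, Real.exp_neg, Real.exp_log hc0,
      Real.rpow_def_of_pos hs0,
      show (((r : ℝ) + 1) / 2) * Real.log ((2 / r) * Real.log β⁻¹)
        = Real.log ((2 / r) * Real.log β⁻¹) * (((r : ℝ) + 1) / 2) from mul_comm _ _]
    ring
  have hupow : ((U (Real.log β⁻¹) ^ 2 : ℝ)) ^ (((r : ℝ) + 1) / 2)
      = U (Real.log β⁻¹) ^ (r + 1) := by
    rw [← Real.rpow_natCast (U (Real.log β⁻¹)) 2, ← Real.rpow_mul hu0.le]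
    have h2 : ((2 : ℕ) : ℝ) * (((r : ℝ) + 1) / 2) = ((r + 1 : ℕ) : ℝ) := by push_cast; ring
    rw [h2, Real.rpow_natCast]
  have hdivpow : ((2 / r) * Real.log β⁻¹ / U (Real.log β⁻¹) ^ 2) ^ (((r : ℝ) + 1) / 2) =
      ((2 / r) * Real.log β⁻¹) ^ (((r : ℝ) + 1) / 2) * (U (Real.log β⁻¹) ^ (r + 1))⁻¹ := by
    rw [Real.div_rpow hs0.le (by positivity), hupow, div_eq_mul_inv]
  have hcc : (d.choose r : ℝ) * (2 * π) ^ (-(r : ℝ) / 2) * (r : ℝ)⁻¹ = c := by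
    rw [hcdef]; ring
  rw [hbu, hexp_split, hexpa, hcc, hdivpow]
  exact aux_final c β (U (Real.log β⁻¹) ^ (r + 1))⁻¹ _ _ hβ0' (ne_of_gt hc0)
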